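/- Let x and y be admissible infinite decimals with nonnegative integer parts, let s ≥ 0 satisfy val(x) + val(y) ≤ 10^s, and let k ≥ 1 satisfy θ_k(x_{k+s}·y_{k+s}) ≠ 9. Then for every n > k + s one has T_{k−1}(x_n·y_n) = T_{k−1}(x_{k+s}·y_{k+s}), where x_j, y_j are the j-th rational truncations, T_m(q) = ⌊10^m q⌋/10^m, and θ_k(q) = ⌊10^k q⌋ − 10·⌊10^{k−1} q⌋. -/

import Mathlib

/-- An infinite decimal: integer part `z` and digits `d : ℕ → ℕ` (indices ≥ 1 used),
each digit between 0 and 9. -/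
structure InfDec where
  z : ℤ
  d : ℕ → ℕ
  d_le : ∀ k, 1 ≤ k → d k ≤ 9

/-- The `k`-th rational truncation `x_k = z + Σ_{i=1}^k d(i)·10^{-i}`. -/
def InfDec.trunc (x : InfDec) (k : ℕ) : ℚ :=
  (x.z : ℚ) + ∑ i ∈ Finset.Icc 1 k, (x.d i : ℚ) / 10 ^ i

/-- The real value `val(x) = z + Σ_{i=1}^∞ d(i)·10^{-i}`. -/
noncomputable def InfDec.val (x : InfDec) : ℝ :=
  (x.z : ℝ) + ∑' i : ℕ, (x.d (i + 1) : ℝ) / 10 ^ (i + 1)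

/-- Admissibility: `d(k) < 9` for infinitely many `k`. -/
def InfDec.Admissible (x : InfDec) : Prop :=
  ∀ N : ℕ, ∃ k ≥ N, x.d k < 9

/-- The `m`-th truncation of a rational: `T_m(q) = ⌊10^m q⌋ / 10^m`. -/
def Tq (m : ℕ) (q : ℚ) : ℚ := (⌊(10 : ℚ) ^ m * q⌋ : ℚ) / 10 ^ m

/-- The `m`-th truncation of a real: `T_m(r) = ⌊10^m r⌋ / 10^m`. -/
noncomputable def Tr (m : ℕ) (r : ℝ) : ℝ := (⌊(10 : ℝ) ^ m * r⌋ : ℝ) / 10 ^ m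

/-- The `m`-th digit of a rational (`m ≥ 1`): `θ_m(q) = ⌊10^m q⌋ − 10·⌊10^{m−1} q⌋`. -/
def digq (m : ℕ) (q : ℚ) : ℤ := ⌊(10 : ℚ) ^ m * q⌋ - 10 * ⌊(10 : ℚ) ^ (m - 1) * q⌋

namespace Aux13

lemma summable_aux (x : InfDec) : Summable (fun i : ℕ => (x.d (i + 1) : ℝ) / 10 ^ (i + 1)) := by
  apply Summable.of_nonneg_of_le (fun i => by positivity) (fun i => ?_)
    (summable_geometric_of_lt_one (by norm_num) (by norm_num : (1/10 : ℝ) < 1))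
  have hd : (x.d (i + 1) : ℝ) ≤ 9 := by exact_mod_cast x.d_le (i+1) (by omega)
  rw [div_le_iff₀ (by positivity)]
  calc (x.d (i + 1) : ℝ) ≤ 9 := hd
    _ ≤ (1/10)^i * 10^(i+1) := by
        rw [pow_succ, one_div, inv_pow, inv_mul_eq_div, mul_comm (10^i : ℝ)]
        rw [mul_div_assoc, div_self (by positivity)]; norm_num

lemma sum_Icc_eq {α : Type*} [DivisionRing α] (x : InfDec) (n : ℕ) :
    ∑ i ∈ Finset.Icc 1 n, (x.d i : α) / 10 ^ i
      = ∑ i ∈ Finset.range n, (x.d (i + 1) : α) / 10 ^ (i + 1) := by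
  have : Finset.Icc 1 n = Finset.Ico 1 (n + 1) := by rw [Finset.Ico_add_one_right_eq_Icc]
  rw [this, Finset.sum_Ico_eq_sum_range]
  simp [add_comm 1]

lemma trunc_le_val (x : InfDec) (n : ℕ) : (x.trunc n : ℝ) ≤ x.val := by
  rw [InfDec.trunc, InfDec.val]
  push_cast
  rw [sum_Icc_eq]
  push_cast
  gcongr
  exact Summable.sum_le_tsum (Finset.range n) (fun i _ => by positivity) (summable_aux x)

lemma val_le_trunc_add (x : InfDec) (n : ℕ) : x.val ≤ (x.trunc n : ℝ) + 1 / 10 ^ n := by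
  rw [InfDec.trunc, InfDec.val]
  push_cast
  rw [sum_Icc_eq]
  push_cast
  rw [add_assoc]
  gcongr (x.z : ℝ) + ?_
  have key := Summable.sum_add_tsum_nat_add (f := fun i : ℕ => (x.d (i + 1) : ℝ) / 10 ^ (i + 1)) n
    (summable_aux x)
  rw [← key]
  gcongr ?_ + ?_
  · exact le_of_eq (by norm_num)
  · -- tail ≤ 1/10^n
    have hb : ∀ i : ℕ, (x.d (i + n + 1) : ℝ) / 10 ^ (i + n + 1)
        ≤ (9 / 10 ^ (n+1)) * (1/10) ^ i := by
      intro i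
      have hd : (x.d (i + n + 1) : ℝ) ≤ 9 := by exact_mod_cast x.d_le _ (by omega)
      have h10 : (10 : ℝ) ^ (i + n + 1) = 10 ^ (n+1) * 10 ^ i := by ring
      rw [div_le_iff₀ (by positivity), h10]
      calc (x.d (i + n + 1) : ℝ) ≤ 9 := hd
        _ = 9 / 10 ^ (n+1) * (1/10)^i * (10 ^ (n+1) * 10 ^ i) := by
            field_simp
            rw [← mul_pow]; norm_num
    have hsum9 : Summable (fun i : ℕ => (9 / 10 ^ (n+1) : ℝ) * (1/10) ^ i) :=
      (summable_geometric_of_lt_one (by norm_num) (by norm_num : (1/10 : ℝ) < 1)).mul_left _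
    calc ∑' i : ℕ, (x.d (i + n + 1) : ℝ) / 10 ^ (i + n + 1)
        ≤ ∑' i : ℕ, (9 / 10 ^ (n+1) : ℝ) * (1/10) ^ i :=
          Summable.tsum_le_tsum hb ((summable_aux x).comp_injective (add_left_injective n)
            |>.congr (fun i => by simp [add_comm i n])
            |>.congr (fun i => rfl)) hsum9
      _ = (9 / 10 ^ (n+1)) * (1 - 1/10)⁻¹ := by
          rw [tsum_mul_left, tsum_geometric_of_lt_one (by norm_num) (by norm_num)]
      _ = 1 / 10 ^ n := by rw [pow_succ]; norm_num; ring

lemma trunc_nonneg (x : InfDec) (hxz : 0 ≤ x.z) (n : ℕ) : 0 ≤ x.trunc n := by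
  rw [InfDec.trunc]
  have : (0:ℚ) ≤ ∑ i ∈ Finset.Icc 1 n, (x.d i : ℚ) / 10 ^ i :=
    Finset.sum_nonneg (fun i _ => by positivity)
  have hz : (0:ℚ) ≤ (x.z : ℚ) := by exact_mod_cast hxz
  linarith

lemma trunc_mono (x : InfDec) {m n : ℕ} (hmn : m ≤ n) : x.trunc m ≤ x.trunc n := by
  rw [InfDec.trunc, InfDec.trunc]
  exact add_le_add_right (Finset.sum_le_sum_of_subset_of_nonneg
    (Finset.Icc_subset_Icc_right hmn) (fun i _ _ => by positivity)) _

end Aux13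

open Aux13 in
theorem stmt13 (x y : InfDec) (hx : x.Admissible) (hy : y.Admissible)
    (hxz : 0 ≤ x.z) (hyz : 0 ≤ y.z) (s : ℕ) (hs : x.val + y.val ≤ 10 ^ s)
    (k : ℕ) (hk : 1 ≤ k) (h : digq k (x.trunc (k + s) * y.trunc (k + s)) ≠ 9) :
    ∀ n > k + s, Tq (k - 1) (x.trunc n * y.trunc n)
      = Tq (k - 1) (x.trunc (k + s) * y.trunc (k + s)) := by
  intro n hn
  obtain ⟨j, rfl⟩ : ∃ j, k = j + 1 := ⟨k - 1, by omega⟩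
  set m : ℕ := j + 1 + s with hm
  set Pm : ℚ := x.trunc m * y.trunc m with hPm
  set Pn : ℚ := x.trunc n * y.trunc n with hPn
  -- basic facts about truncations
  have ham0 : (0:ℚ) ≤ x.trunc m := trunc_nonneg x hxz m
  have hbm0 : (0:ℚ) ≤ y.trunc m := trunc_nonneg y hyz m
  have hamn : x.trunc m ≤ x.trunc n := trunc_mono x hn.le
  have hbmn : y.trunc m ≤ y.trunc n := trunc_mono y hn.le
  -- Step 1 : Pm ≤ Pn
  have hPmn : Pm ≤ Pn :=
    mul_le_mul hamn hbmn hbm0 (le_trans ham0 hamn)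
  -- Step 2 : Pn ≤ Pm + 1/10^(j+1), proved over ℝ
  have hPnm : Pn ≤ Pm + 1 / 10 ^ (j + 1) := by
    rw [hPn, hPm, ← Rat.cast_le (K := ℝ)]
    push_cast
    set X := x.val with hX
    set Y := y.val with hY
    set an : ℝ := ((x.trunc n : ℚ) : ℝ) with han
    set bn : ℝ := ((y.trunc n : ℚ) : ℝ) with hbn
    set am : ℝ := ((x.trunc m : ℚ) : ℝ) with ham
    set bm : ℝ := ((y.trunc m : ℚ) : ℝ) with hbm
    have h1 : an ≤ X := trunc_le_val x n
    have h2 : bn ≤ Y := trunc_le_val y n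
    have h3 : X ≤ am + 1 / 10 ^ m := val_le_trunc_add x m
    have h4 : Y ≤ bm + 1 / 10 ^ m := val_le_trunc_add y m
    have h5 : (0:ℝ) ≤ am := by rw [ham]; exact_mod_cast ham0
    have h6 : (0:ℝ) ≤ bm := by rw [hbm]; exact_mod_cast hbm0
    have h7 : am ≤ an := by rw [ham, han]; exact_mod_cast hamn
    have h8 : bm ≤ bn := by rw [hbm, hbn]; exact_mod_cast hbmn
    have hX0 : (0:ℝ) ≤ X := le_trans h5 (le_trans h7 h1)
    have hY0 : (0:ℝ) ≤ Y := le_trans h6 (le_trans h8 h2)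
    have e1 : an * (bn - bm) ≤ X * (1 / 10 ^ m) :=
      mul_le_mul h1 (by linarith) (by linarith) hX0
    have e2 : (an - am) * bm ≤ (1 / 10 ^ m) * Y :=
      mul_le_mul (by linarith) (le_trans h8 h2) h6 (by positivity)
    have e3 : (X + Y) / 10 ^ m ≤ (10:ℝ) ^ s / 10 ^ m := by gcongr
    have e4 : (10:ℝ) ^ s / 10 ^ m = 1 / 10 ^ (j + 1) := by
      rw [hm, pow_add]; field_simp
    have key : an * bn - am * bm = an * (bn - bm) + (an - am) * bm := by ring
    have e5 : X * (1 / 10 ^ m) + (1 / 10 ^ m) * Y = (X + Y) / 10 ^ m := by ring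
    linarith
  -- Step 3 : floor argument
  set M : ℤ := ⌊(10:ℚ) ^ j * Pm⌋ with hM
  set N : ℤ := ⌊(10:ℚ) ^ (j + 1) * Pm⌋ with hN
  have hpow : (10:ℚ) ^ (j + 1) = 10 * 10 ^ j := by ring
  have f1 : (M:ℚ) ≤ 10 ^ j * Pm := Int.floor_le _
  have f1' : 10 ^ j * Pm < (M:ℚ) + 1 := Int.lt_floor_add_one _
  have f2 : 10 * ((10:ℚ) ^ j * Pm) < (N:ℚ) + 1 := by
    have t := Int.lt_floor_add_one ((10:ℚ) ^ (j + 1) * Pm)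
    rw [← hN] at t
    rw [hpow, mul_assoc] at t
    exact t
  have fN1 : 10 * M ≤ N := by
    rw [hN]
    apply Int.le_floor.mpr
    rw [hpow, mul_assoc]
    push_cast
    linarith
  have fN2 : N < 10 * M + 10 := by
    rw [hN]
    apply Int.floor_lt.mpr
    rw [hpow, mul_assoc]
    push_cast
    linarith
  have hdig : digq (j + 1) Pm = N - 10 * M := by
    rw [digq, Nat.add_sub_cancel]
  have hN8 : N ≤ 10 * M + 8 := by
    rw [hdig] at h
    omega
  have hN8' : (N:ℚ) ≤ 10 * (M:ℚ) + 8 := by exact_mod_cast hN8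
  have f0 : (10:ℚ) ^ j * Pm ≤ 10 ^ j * Pn :=
    mul_le_mul_of_nonneg_left hPmn (by positivity)
  have f3 : (10:ℚ) ^ j * Pn ≤ 10 ^ j * Pm + 1 / 10 := by
    have h110 : (10:ℚ) ^ j * (1 / 10 ^ (j + 1)) = 1 / 10 := by
      rw [pow_succ]; field_simp
    have := mul_le_mul_of_nonneg_left hPnm (by positivity : (0:ℚ) ≤ 10 ^ j)
    rw [mul_add, h110] at this
    exact this
  have hfl : ⌊(10:ℚ) ^ j * Pn⌋ = M := by
    rw [Int.floor_eq_iff]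
    constructor
    · exact le_trans f1 f0
    · push_cast
      linarith
  simp only [Nat.add_sub_cancel]
  rw [Tq, Tq, hfl, hM]
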